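/- Dalmatian substitution lemma: Let K, L be CRGs with K 0-core, and fix n ∈ ℕ. Let m ∈ ℕ and let μ be a probability mass on V(L) with m·μ(x) ≥ n for every black vertex x of L. Suppose K has s white vertices, L has t white vertices, s > t, and n × K ⊑ L[μ,m]. Then for every integer 1 ≤ r ≤ s − t, also n × Kⁿ(r) ⊑ L[μ,m], where Kⁿ(r) is obtained from K by replacing r of its white vertices by sets of n black vertices joined pairwise by white edges (and retaining all other adjacencies, with the new black vertices inheriting the edges of the replaced white vertex). -/

import Mathlib

open Finset

inductive EColor | white | black | gray
deriving DecidableEq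

/-- The `p`-weight of an edge color: `p` for white, `1-p` for black, `0` for gray. -/
def wval (p : ℝ) : EColor → ℝ
  | .white => p
  | .black => 1 - p
  | .gray => 0

/-- The matrix `M_K(p)` of a CRG given by vertex colors `vb` (`true` = black)
and edge colors `ec`. -/
def Mmat {V : Type*} [DecidableEq V] (vb : V → Bool) (ec : V → V → EColor) (p : ℝ)
    (x y : V) : ℝ :=
  if x = y then (if vb x then 1 - p else p) else wval p (ec x y)

/-- `μ` is a probability mass. -/
def IsProb {V : Type*} [Fintype V] (μ : V → ℝ) : Prop :=
  (∀ x, 0 ≤ μ x) ∧ ∑ x, μ x = 1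

/-- The quadratic form `⟨μ, M_K(p) μ⟩`. -/
def QF {V : Type*} [Fintype V] [DecidableEq V] (vb : V → Bool) (ec : V → V → EColor)
    (p : ℝ) (μ : V → ℝ) : ℝ :=
  ∑ x, ∑ y, μ x * Mmat vb ec p x y * μ y

/-- `g` is the minimum of the quadratic form over probability masses, i.e. `g = g_K(p)`. -/
def gIs {V : Type*} [Fintype V] [DecidableEq V] (vb : V → Bool) (ec : V → V → EColor)
    (p g : ℝ) : Prop :=
  IsLeast {t | ∃ μ : V → ℝ, IsProb μ ∧ t = QF vb ec p μ} g

/-- The weighted gray-degree `d_G(u) = ∑_{v : uv gray} μ(v)`. -/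
def grayDeg {V : Type*} [Fintype V] [DecidableEq V] (ec : V → V → EColor) (μ : V → ℝ)
    (u : V) : ℝ :=
  ∑ v ∈ Finset.univ.filter (fun v => v ≠ u ∧ ec u v = EColor.gray), μ v

/-- Colored-graph containment `G ⊑ H` between edge-colorings. -/
def SubCG {A B : Type*} (e1 : A → A → EColor) (e2 : B → B → EColor) : Prop :=
  ∃ φ : A → B, Function.Injective φ ∧ ∀ a b, a ≠ b →
    (e1 a b = EColor.black → (e2 (φ a) (φ b) = EColor.black ∨ e2 (φ a) (φ b) = EColor.gray)) ∧
    (e1 a b = EColor.white → (e2 (φ a) (φ b) = EColor.white ∨ e2 (φ a) (φ b) = EColor.gray)) ∧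
    (e1 a b = EColor.gray → e2 (φ a) (φ b) = EColor.gray)

/-- The `m`-fold blow-up `m × K` of a CRG as a colored graph. -/
def blowup {V : Type*} [DecidableEq V] (vb : V → Bool) (ec : V → V → EColor) (m : ℕ) :
    V × Fin m → V × Fin m → EColor :=
  fun x y => if x.1 = y.1 then (if vb x.1 then EColor.black else EColor.white)
    else ec x.1 y.1

/-- The blow-up `L[μ,m]` of a CRG, where vertex `x` becomes `⌊μ(x)·m⌋` vertices. -/
def sblow {V : Type*} [DecidableEq V] (vb : V → Bool) (ec : V → V → EColor) (μ : V → ℝ)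
    (m : ℕ) : ((x : V) × Fin ⌊μ x * (m : ℝ)⌋₊) → ((x : V) × Fin ⌊μ x * (m : ℝ)⌋₊) → EColor :=
  fun a b => if a.1 = b.1 then (if vb a.1 then EColor.black else EColor.white)
    else ec a.1 b.1

/-- The vertex type of `Kⁿ(r)`: the white vertices in `R` are replaced by dalmatian sets of
`n` black vertices. -/
abbrev dalmType (V : Type*) (R : Finset V) (n : ℕ) : Type _ :=
  {v : V // v ∉ R} ⊕ ({v : V // v ∈ R} × Fin n)

/-- Vertex colors of `Kⁿ(r)`: the new dalmatian vertices are black. -/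
def dalmVB {V : Type*} (vb : V → Bool) (R : Finset V) (n : ℕ) : dalmType V R n → Bool
  | .inl a => vb a.1
  | .inr _ => true

/-- Edge colors of `Kⁿ(r)`: inside a dalmatian set edges are white; a dalmatian vertex
inherits the edges of the white vertex it replaces. -/
def dalmEC {V : Type*} [DecidableEq V] (ec : V → V → EColor) (R : Finset V) (n : ℕ) :
    dalmType V R n → dalmType V R n → EColor
  | .inl a, .inl b => ec a.1 b.1
  | .inl a, .inr x => ec a.1 x.1.1
  | .inr x, .inl b => ec x.1.1 b.1
  | .inr x, .inr y => if x.1.1 = y.1.1 then EColor.white else ec x.1.1 y.1.1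

/-! The white vertices of a 0-core `K` are joined to every other vertex by gray edges, so copies
of distinct white vertices land in distinct classes of `L[μ,m]`. Hence at most `t` white vertices
of `K` send a copy into a white class, and at least `s - t` send all `n` copies into black
classes. For such a vertex `x` the copies `(x, i)` lie in pairwise distinct black classes, joined
by white or gray edges and each holding at least `n` vertices, so the `i`-th dalmatian vertex
replacing `x` can be blown up inside the class of `(x, i)`. White vertices of `K` are
interchangeable, so after permuting them we may assume that `R` consists of such vertices. -/

theorem EColor.refines_iff (c d : EColor) :
    ((c = .black → d = .black ∨ d = .gray) ∧ (c = .white → d = .white ∨ d = .gray) ∧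
      (c = .gray → d = .gray)) ↔ c = d ∨ d = .gray := by
  cases c <;> cases d <;> simp

def IsCGEmbedding {A B : Type*} (e₁ : A → A → EColor) (e₂ : B → B → EColor)
    (φ : A → B) : Prop :=
  Function.Injective φ ∧
    ∀ a b, a ≠ b → e₁ a b = e₂ (φ a) (φ b) ∨ e₂ (φ a) (φ b) = .gray

theorem subCG_iff {A B : Type*} (e₁ : A → A → EColor) (e₂ : B → B → EColor) :
    SubCG e₁ e₂ ↔ ∃ φ, IsCGEmbedding e₁ e₂ φ := by
  simp only [SubCG, IsCGEmbedding, EColor.refines_iff]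

theorem IsCGEmbedding.comp {A B C : Type*} {e₀ : A → A → EColor} {e₁ : B → B → EColor}
    {e₂ : C → C → EColor} {φ : B → C} {ψ : A → B} (hφ : IsCGEmbedding e₁ e₂ φ)
    (hψ : Function.Injective ψ) (he : ∀ a b, a ≠ b → e₁ (ψ a) (ψ b) = e₀ a b) :
    IsCGEmbedding e₀ e₂ (φ ∘ ψ) :=
  ⟨hφ.1.comp hψ, fun a b hab => he a b hab ▸ hφ.2 _ _ (hψ.ne hab)⟩

def IsZeroCore {V : Type*} (vb : V → Bool) (ec : V → V → EColor) : Prop :=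
  (∀ x y, x ≠ y → ec x y ≠ .black) ∧
    ∀ x y, x ≠ y → ec x y = .white → vb x = true ∧ vb y = true

theorem IsZeroCore.ec_eq_gray {V : Type*} {vb : V → Bool} {ec : V → V → EColor}
    (hK : IsZeroCore vb ec) {x y : V} (hxy : x ≠ y) (hw : vb x = false ∨ vb y = false) :
    ec x y = .gray := by
  cases h : ec x y with
  | black => exact absurd h (hK.1 x y hxy)
  | white =>
    obtain ⟨hx, hy⟩ := hK.2 x y hxy h
    simp [hx, hy] at hw
  | gray => rfl

theorem Equiv.Perm.pred_apply_iff_of_forall_fix {α : Type*} {σ : Equiv.Perm α} {p : α → Prop}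
    (hσ : ∀ x, p x → σ x = x) (x : α) : p (σ x) ↔ p x := by
  refine ⟨fun h => ?_, fun h => (hσ x h).symm ▸ h⟩
  rwa [← σ.injective (hσ _ h)]

theorem exists_perm_fix_of_card_eq {α : Type*} {p : α → Prop} [DecidablePred p]
    {R T : Finset α} (hR : ∀ x ∈ R, p x) (hT : ∀ x ∈ T, p x) (hRT : #R = #T) :
    ∃ σ : Equiv.Perm α, (∀ x, ¬ p x → σ x = x) ∧ ∀ x ∈ R, σ x ∈ T := by
  have hcard : #(R.subtype p) = #(T.subtype p) := by
    rwa [card_subtype, card_subtype, filter_true_of_mem hR, filter_true_of_mem hT]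
  obtain ⟨σ, hσ⟩ := Equiv.Perm.exists_map_finset_eq _ _ hcard
  refine ⟨Equiv.Perm.ofSubtype σ, fun x hx => Equiv.Perm.ofSubtype_apply_of_not_mem σ hx,
    fun x hx => ?_⟩
  have : σ ⟨x, hR x hx⟩ ∈ T.subtype p := hσ ▸ mem_map_of_mem _ (mem_subtype.2 hx)
  rw [Equiv.Perm.ofSubtype_apply_of_mem σ (hR x hx)]
  exact mem_subtype.1 this

section Relabel

variable {V : Type*} {vb : V → Bool} {σ : Equiv.Perm V}

theorem vb_perm_apply (hσ : ∀ x, vb x = true → σ x = x) (x : V) : vb (σ x) = vb x :=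
  Bool.eq_iff_iff.2 (Equiv.Perm.pred_apply_iff_of_forall_fix hσ x)

variable {ec : V → V → EColor}

theorem IsZeroCore.ec_perm_apply (hK : IsZeroCore vb ec) (hσ : ∀ x, vb x = true → σ x = x)
    {a b : V} (hab : a ≠ b) : ec (σ a) (σ b) = ec a b := by
  by_cases hw : vb a = false ∨ vb b = false
  · rw [hK.ec_eq_gray hab hw, hK.ec_eq_gray (σ.injective.ne hab)]
    simpa only [vb_perm_apply hσ] using hw
  · simp only [not_or, Bool.not_eq_false] at hw
    rw [hσ a hw.1, hσ b hw.2]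

theorem IsZeroCore.blowup_perm_apply [DecidableEq V] (hK : IsZeroCore vb ec)
    (hσ : ∀ x, vb x = true → σ x = x) (n : ℕ) (a b : V × Fin n) :
    blowup vb ec n (Prod.map σ id a) (Prod.map σ id b) = blowup vb ec n a b := by
  by_cases h : a.1 = b.1
  · simp [blowup, h, vb_perm_apply hσ]
  · simp [blowup, h, hK.ec_perm_apply hσ h]

end Relabel

section Blowup

variable {W : Type*} [DecidableEq W] {vb : W → Bool} {ec : W → W → EColor} {μ : W → ℝ}
  {m : ℕ} {a b a' b' : (x : W) × Fin ⌊μ x * (m : ℝ)⌋₊}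

theorem sblow_congr (ha : a.1 = a'.1) (hb : b.1 = b'.1) :
    sblow vb ec μ m a b = sblow vb ec μ m a' b' := by
  simp only [sblow, ha, hb]

theorem sblow_eq_gray_iff :
    sblow vb ec μ m a b = .gray ↔ a.1 ≠ b.1 ∧ ec a.1 b.1 = .gray := by
  by_cases h : a.1 = b.1
  · simp only [sblow, if_pos h]
    split <;> simp [h]
  · simp [sblow, h]

theorem sblow_of_fst_eq (h : a.1 = b.1) (hv : vb a.1 = true) :
    sblow vb ec μ m a b = .black := by
  simp only [sblow, if_pos h, hv, if_true]

end Blowup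

section Embedding

variable {V W : Type*} {vbK : V → Bool} {ecK : V → V → EColor}
  {vbL : W → Bool} {ecL : W → W → EColor} {μ : W → ℝ} {n m : ℕ}
  {φ : V × Fin n → (x : W) × Fin ⌊μ x * (m : ℝ)⌋₊}

def whitesIntoBlack [Fintype V] (vbK : V → Bool) (vbL : W → Bool)
    (φ : V × Fin n → (x : W) × Fin ⌊μ x * (m : ℝ)⌋₊) : Finset V :=
  univ.filter fun g => vbK g = false ∧ ∀ k, vbL (φ (g, k)).1 = true

theorem mem_whitesIntoBlack [Fintype V] {g : V} :
    g ∈ whitesIntoBlack vbK vbL φ ↔ vbK g = false ∧ ∀ k, vbL (φ (g, k)).1 = true := by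
  simp [whitesIntoBlack]

theorem le_floor_of_mem_whitesIntoBlack [Fintype V]
    (hm : ∀ x, vbL x = true → (n : ℝ) ≤ (m : ℝ) * μ x) {g : V}
    (hg : g ∈ whitesIntoBlack vbK vbL φ) (i : Fin n) :
    n ≤ ⌊μ (φ (g, i)).1 * (m : ℝ)⌋₊ :=
  Nat.le_floor (by rw [mul_comm]; exact hm _ ((mem_whitesIntoBlack.1 hg).2 i))

theorem IsCGEmbedding.fst_ne_of_gray [DecidableEq V] [DecidableEq W]
    (hφ : IsCGEmbedding (blowup vbK ecK n) (sblow vbL ecL μ m) φ)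
    {p q : V × Fin n} (hpq : p.1 ≠ q.1) (hgray : ecK p.1 q.1 = .gray) :
    (φ p).1 ≠ (φ q).1 := by
  have hne : p ≠ q := fun h => hpq (congrArg Prod.fst h)
  have : sblow vbL ecL μ m (φ p) (φ q) = .gray := by
    rcases hφ.2 p q hne with h | h
    · rwa [← h, blowup, if_neg hpq]
    · exact h
  exact (sblow_eq_gray_iff.1 this).1

theorem IsCGEmbedding.fst_ne_of_mem_whitesIntoBlack
    [Fintype V] [DecidableEq V] [DecidableEq W]
    (hφ : IsCGEmbedding (blowup vbK ecK n) (sblow vbL ecL μ m) φ) (hK : IsZeroCore vbK ecK)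
    {p q : V × Fin n} (hpq : p ≠ q) (hp : p.1 ∈ whitesIntoBlack vbK vbL φ) :
    (φ p).1 ≠ (φ q).1 := by
  rw [mem_whitesIntoBlack] at hp
  by_cases h : p.1 = q.1
  · intro hcls
    have hblack := sblow_of_fst_eq (ec := ecL) hcls (hp.2 p.2)
    rcases hφ.2 p q hpq with hc | hc <;> rw [hblack] at hc
    · simp only [blowup, if_pos h, hp.1] at hc
      cases hc
    · cases hc
  · exact hφ.fst_ne_of_gray h (hK.ec_eq_gray h (.inl hp.1))

end Embedding

section Counting

variable {V W : Type*} [Fintype V] [Fintype W] [DecidableEq V] [DecidableEq W]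
  {vbK : V → Bool} {ecK : V → V → EColor} {vbL : W → Bool} {ecL : W → W → EColor}
  {μ : W → ℝ} {n m : ℕ} {φ : V × Fin n → (x : W) × Fin ⌊μ x * (m : ℝ)⌋₊}

theorem IsCGEmbedding.card_whites_sdiff_whitesIntoBlack_le
    (hφ : IsCGEmbedding (blowup vbK ecK n) (sblow vbL ecL μ m) φ) (hK : IsZeroCore vbK ecK) :
    #((univ.filter fun x => vbK x = false) \ whitesIntoBlack vbK vbL φ) ≤
      #(univ.filter fun x => vbL x = false) := by
  refine card_le_card_of_forall_subsingleton (fun g w => ∃ k, (φ (g, k)).1 = w) ?_ ?_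
  · intro g hg
    simp only [whitesIntoBlack, mem_sdiff, mem_filter, mem_univ, true_and, not_and,
      not_forall, Bool.not_eq_true] at hg
    obtain ⟨k, hk⟩ := hg.2 hg.1
    exact ⟨_, mem_filter.2 ⟨mem_univ _, hk⟩, k, rfl⟩
  · rintro w - g ⟨hg, k, rfl⟩ g' ⟨-, k', hk'⟩
    by_contra hne
    have hgw : vbK g = false := (mem_filter.1 (mem_sdiff.1 hg).1).2
    exact hφ.fst_ne_of_gray (p := (g, k)) (q := (g', k')) hne
      (hK.ec_eq_gray hne (.inl hgw)) hk'.symm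

theorem IsCGEmbedding.card_whites_sub_le_card_whitesIntoBlack
    (hφ : IsCGEmbedding (blowup vbK ecK n) (sblow vbL ecL μ m) φ) (hK : IsZeroCore vbK ecK) :
    #(univ.filter fun x => vbK x = false) - #(univ.filter fun x => vbL x = false) ≤
      #(whitesIntoBlack vbK vbL φ) := by
  have := card_le_card_sdiff_add_card (s := univ.filter fun x => vbK x = false)
    (t := whitesIntoBlack vbK vbL φ)
  have := hφ.card_whites_sdiff_whitesIntoBlack_le hK
  omega

end Counting

section Dalmatian

variable {V W : Type*} {vbK : V → Bool} {ecK : V → V → EColor}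
  {vbL : W → Bool} {ecL : W → W → EColor} {μ : W → ℝ} {n m : ℕ} {R : Finset V}
  {φ : V × Fin n → (x : W) × Fin ⌊μ x * (m : ℝ)⌋₊}

def dalmProj (R : Finset V) (n : ℕ) : dalmType V R n × Fin n → V × Fin n
  | (.inl a, k) => (a.1, k)
  | (.inr (x, i), _) => (x.1, i)

theorem exists_eq_inr_of_dalmProj_eq {z z' : dalmType V R n × Fin n}
    (h : dalmProj R n z = dalmProj R n z') (hne : z ≠ z') :
    ∃ x i k k', z = (.inr (x, i), k) ∧ z' = (.inr (x, i), k') := by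
  rcases z with ⟨a | ⟨x, i⟩, k⟩ <;> rcases z' with ⟨b | ⟨y, j⟩, k'⟩ <;>
    simp only [dalmProj, Prod.mk.injEq] at h
  · exact absurd (by rw [Subtype.ext h.1, h.2]) hne
  · exact absurd (h.1 ▸ y.2) a.2
  · exact absurd (h.1 ▸ x.2) b.2
  · obtain ⟨hxy, rfl⟩ := h
    obtain rfl : x = y := Subtype.ext hxy
    exact ⟨x, i, k, k', rfl, rfl⟩

theorem blowup_dalm_of_dalmProj_ne [DecidableEq V] (hR : ∀ x ∈ R, vbK x = false)
    {z z' : dalmType V R n × Fin n} (h : dalmProj R n z ≠ dalmProj R n z') :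
    blowup (dalmVB vbK R n) (dalmEC ecK R n) n z z' =
      blowup vbK ecK n (dalmProj R n z) (dalmProj R n z') := by
  rcases z with ⟨a | ⟨x, i⟩, k⟩ <;> rcases z' with ⟨b | ⟨y, j⟩, k'⟩ <;>
    simp only [dalmProj, ne_eq, Prod.mk.injEq] at h
  · by_cases hab : a.1 = b.1 <;>
      simp [blowup, dalmProj, dalmVB, dalmEC, hab, Subtype.ext_iff]
  · have : a.1 ≠ y.1 := fun hay => a.2 (hay ▸ y.2)
    simp [blowup, dalmProj, dalmEC, this]
  · have : x.1 ≠ b.1 := fun hxb => b.2 (hxb ▸ x.2)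
    simp [blowup, dalmProj, dalmEC, this]
  · by_cases hxy : x.1 = y.1
    · have hij : i ≠ j := fun hij => h ⟨hxy, hij⟩
      simp [blowup, dalmProj, dalmEC, hxy, hij, hR y.1 y.2, Subtype.ext_iff]
    · simp [blowup, dalmProj, dalmEC, hxy, Subtype.ext_iff]

noncomputable def dalmEmbed (φ : V × Fin n → (x : W) × Fin ⌊μ x * (m : ℝ)⌋₊)
    (hcap : ∀ x ∈ R, ∀ i, n ≤ ⌊μ (φ (x, i)).1 * (m : ℝ)⌋₊) :
    dalmType V R n × Fin n → (x : W) × Fin ⌊μ x * (m : ℝ)⌋₊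
  | (.inl a, k) => φ (a.1, k)
  | (.inr (x, i), k) => ⟨(φ (x.1, i)).1, Fin.castLE (hcap x.1 x.2 i) k⟩

theorem fst_dalmEmbed (hcap : ∀ x ∈ R, ∀ i, n ≤ ⌊μ (φ (x, i)).1 * (m : ℝ)⌋₊)
    (z : dalmType V R n × Fin n) : (dalmEmbed φ hcap z).1 = (φ (dalmProj R n z)).1 := by
  rcases z with ⟨_ | _, _⟩ <;> rfl

variable [Fintype V] [DecidableEq V] [DecidableEq W]

theorem dalmEmbed_injective
    (hφ : IsCGEmbedding (blowup vbK ecK n) (sblow vbL ecL μ m) φ) (hK : IsZeroCore vbK ecK)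
    (hR : R ⊆ whitesIntoBlack vbK vbL φ)
    (hcap : ∀ x ∈ R, ∀ i, n ≤ ⌊μ (φ (x, i)).1 * (m : ℝ)⌋₊) :
    Function.Injective (dalmEmbed φ hcap) := by
  have hsep {p q : V × Fin n} (hpq : p ≠ q) (hp : p.1 ∈ R) : (φ p).1 ≠ (φ q).1 :=
    hφ.fst_ne_of_mem_whitesIntoBlack hK hpq (hR hp)
  rintro ⟨a | ⟨x, i⟩, k⟩ ⟨b | ⟨y, j⟩, k'⟩ h
  · obtain ⟨hab, rfl⟩ := Prod.ext_iff.1 (hφ.1 h)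
    rw [Subtype.ext hab]
  · have : y.1 ≠ a.1 := ne_of_mem_of_not_mem y.2 a.2
    exact absurd (congrArg Sigma.fst h).symm (hsep (q := (a.1, k)) (by simp [this]) y.2)
  · have : x.1 ≠ b.1 := ne_of_mem_of_not_mem x.2 b.2
    exact absurd (congrArg Sigma.fst h) (hsep (q := (b.1, k')) (by simp [this]) x.2)
  · by_cases hxy : (x.1, i) = (y.1, j)
    · obtain ⟨hxy, rfl⟩ := Prod.ext_iff.1 hxy
      obtain rfl : x = y := Subtype.ext hxy
      simp only [dalmEmbed, Sigma.mk.injEq, heq_eq_eq, Fin.castLE_inj, true_and] at h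
      rw [h]
    · exact absurd (congrArg Sigma.fst h) (hsep hxy x.2)

theorem isCGEmbedding_dalmEmbed
    (hφ : IsCGEmbedding (blowup vbK ecK n) (sblow vbL ecL μ m) φ) (hK : IsZeroCore vbK ecK)
    (hR : R ⊆ whitesIntoBlack vbK vbL φ)
    (hcap : ∀ x ∈ R, ∀ i, n ≤ ⌊μ (φ (x, i)).1 * (m : ℝ)⌋₊) :
    IsCGEmbedding (blowup (dalmVB vbK R n) (dalmEC ecK R n) n) (sblow vbL ecL μ m)
      (dalmEmbed φ hcap) := by
  refine ⟨dalmEmbed_injective hφ hK hR hcap, fun z z' hne => ?_⟩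
  by_cases hp : dalmProj R n z = dalmProj R n z'
  · obtain ⟨x, i, k, k', rfl, rfl⟩ := exists_eq_inr_of_dalmProj_eq hp hne
    have hblack := (mem_whitesIntoBlack.1 (hR x.2)).2 i
    exact .inl (by simp [blowup, dalmVB, sblow, dalmEmbed, hblack])
  · have hRw (x) (hx : x ∈ R) : vbK x = false := (mem_whitesIntoBlack.1 (hR hx)).1
    rw [blowup_dalm_of_dalmProj_ne hRw hp,
      sblow_congr (fst_dalmEmbed hcap z) (fst_dalmEmbed hcap z')]
    exact hφ.2 _ _ hp

end Dalmatian

theorem stmt17_general {V W : Type*} [Fintype V] [DecidableEq V] [Fintype W] [DecidableEq W]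
    (vbK : V → Bool) (ecK : V → V → EColor)
    (hnbK : ∀ x y, x ≠ y → ecK x y ≠ EColor.black)
    (hweK : ∀ x y, x ≠ y → ecK x y = EColor.white → vbK x = true ∧ vbK y = true)
    (vbL : W → Bool) (ecL : W → W → EColor)
    (n m : ℕ) (μ : W → ℝ)
    (hm : ∀ x, vbL x = true → (n : ℝ) ≤ (m : ℝ) * μ x)
    (s t : ℕ)
    (hs : (Finset.univ.filter fun x => vbK x = false).card = s)
    (ht : (Finset.univ.filter fun x => vbL x = false).card = t)
    (hemb : SubCG (blowup vbK ecK n) (sblow vbL ecL μ m))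
    (r : ℕ) (hr2 : r ≤ s - t)
    (R : Finset V) (hRcard : R.card = r) (hRwhite : ∀ x ∈ R, vbK x = false) :
    SubCG (blowup (dalmVB vbK R n) (dalmEC ecK R n) n) (sblow vbL ecL μ m) := by
  have hK : IsZeroCore vbK ecK := ⟨hnbK, hweK⟩
  obtain ⟨φ, hφ⟩ := (subCG_iff _ _).1 hemb
  obtain ⟨T, hT, hTcard⟩ : ∃ T ⊆ whitesIntoBlack vbK vbL φ, #T = #R := by
    have := hφ.card_whites_sub_le_card_whitesIntoBlack hK
    exact exists_subset_card_eq (by omega)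
  obtain ⟨σ, hσfix, hσR⟩ := exists_perm_fix_of_card_eq (p := (vbK · = false)) hRwhite
    (fun x hx => (mem_whitesIntoBlack.1 (hT hx)).1) hTcard.symm
  have hσ (x) (hx : vbK x = true) : σ x = x := hσfix x (by simp [hx])
  have hψ : IsCGEmbedding (blowup vbK ecK n) (sblow vbL ecL μ m) (φ ∘ Prod.map σ id) :=
    hφ.comp (σ.injective.prodMap Function.injective_id) fun a b _ =>
      hK.blowup_perm_apply hσ n a b
  have hRψ : R ⊆ whitesIntoBlack vbK vbL (φ ∘ Prod.map σ id) := fun x hx =>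
    mem_whitesIntoBlack.2 ⟨hRwhite x hx, (mem_whitesIntoBlack.1 (hT (hσR x hx))).2⟩
  exact (subCG_iff _ _).2 ⟨_, isCGEmbedding_dalmEmbed hψ hK hRψ
    fun x hx => le_floor_of_mem_whitesIntoBlack hm (hRψ hx)⟩

/-- dalmatian substitution: let `K` be 0-core with `s` white vertices, `L` a
CRG with `t < s` white vertices, `μ` a probability mass on `V(L)` with `m·μ(x) ≥ n` for
every black `x`.  If `n × K ⊑ L[μ,m]`, then for every set `R` of `r` white vertices of `K`
with `1 ≤ r ≤ s − t`, also `n × Kⁿ(r) ⊑ L[μ,m]`. -/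
theorem stmt17 {V W : Type*} [Fintype V] [DecidableEq V] [Fintype W] [DecidableEq W]
    (vbK : V → Bool) (ecK : V → V → EColor) (hsymmK : ∀ a b, ecK a b = ecK b a)
    (hnbK : ∀ x y, x ≠ y → ecK x y ≠ EColor.black)
    (hweK : ∀ x y, x ≠ y → ecK x y = EColor.white → vbK x = true ∧ vbK y = true)
    (vbL : W → Bool) (ecL : W → W → EColor)
    (n m : ℕ) (μ : W → ℝ) (hμ : IsProb μ)
    (hm : ∀ x, vbL x = true → (n : ℝ) ≤ (m : ℝ) * μ x)
    (s t : ℕ)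
    (hs : (Finset.univ.filter fun x => vbK x = false).card = s)
    (ht : (Finset.univ.filter fun x => vbL x = false).card = t)
    (hst : t < s)
    (hemb : SubCG (blowup vbK ecK n) (sblow vbL ecL μ m))
    (r : ℕ) (hr1 : 1 ≤ r) (hr2 : r ≤ s - t)
    (R : Finset V) (hRcard : R.card = r) (hRwhite : ∀ x ∈ R, vbK x = false) :
    SubCG (blowup (dalmVB vbK R n) (dalmEC ecK R n) n) (sblow vbL ecL μ m) :=
  stmt17_general vbK ecK hnbK hweK vbL ecL n m μ hm s t hs ht hemb r hr2 R hRcard hRwhite
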